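/- Every spine-normal term terminates on the machine after suitable closure: for any spine normal form W there is a natural number d such that for every memory S_A of dimension d and every substitution map σ of dimension d, there exists a memory T_A with S_A, σW ⇓ T_A. -/
import Mathlib


/-- Terms of the Functional Machine Calculus. -/
inductive Tm : Type
| var : ℕ → Tm
| pop : ℕ → ℕ → Tm → Tm      -- a<x>.M
| push : Tm → ℕ → Tm → Tm    -- [N]a.M
| skip : Tm
| seq : Tm → Tm → Tm
deriving DecidableEq

open Tm

/-- Free variables. -/
def fv : Tm → Finset ℕ
| Tm.var y => {y}
| Tm.pop _ y M => (fv M).erase y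
| Tm.push N _ M => fv N ∪ fv M
| Tm.skip => ∅
| Tm.seq M N => fv M ∪ fv N

/-- Substitution {N/x}M. -/
def subst (x : ℕ) (N : Tm) : Tm → Tm
| Tm.var y => if y = x then N else Tm.var y
| Tm.pop a y M => if y = x then Tm.pop a y M else Tm.pop a y (subst x N M)
| Tm.push P a M => Tm.push (subst x N P) a (subst x N M)
| Tm.skip => Tm.skip
| Tm.seq M P => Tm.seq (subst x N M) (subst x N P)

/-- A memory: a family of stacks of terms, indexed by locations. -/
abbrev Mem := ℕ → List Tm

def emptyMem : Mem := fun _ => []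

/-- Push a term onto stack `a` of a memory. -/
def pushMem (S : Mem) (a : ℕ) (N : Tm) : Mem := Function.update S a (N :: S a)

/-- Machine states: memory, term, continuation stack. -/
abbrev MState := Mem × Tm × List Tm

/-- Machine transitions. -/
inductive Step : MState → MState → Prop
| push : Step (S, Tm.push N a M, K) (pushMem S a N, M, K)
| pop  : Step (pushMem S a N, Tm.pop a x M, K) (S, subst x N M, K)
| seq  : Step (S, Tm.seq M N, K) (S, M, N :: K)
| skip : Step (S, Tm.skip, M :: K) (S, M, K)

/-- Runs, measured by the number of states traversed (length ≥ 1). -/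
inductive Runs : ℕ → MState → MState → Prop
| single : Runs 1 s s
| step : Step s t → Runs n t u → Runs (n+1) s u

/-- Quantified big-step evaluation. -/
inductive Eval : Mem → Tm → ℕ → Mem → Prop
| skip : Eval S Tm.skip 1 S
| seq : Eval R M m S → Eval S N n T → Eval R (Tm.seq M N) (m+n+1) T
| push : Eval (pushMem S a N) M n T → Eval S (Tm.push N a M) (n+1) T
| pop : Eval S (subst x N M) n T → Eval (pushMem S a N) (Tm.pop a x M) (n+1) T

/-- The six reduction rules. -/
inductive Rule : Tm → Tm → Prop
| beta : Rule (Tm.push N a (Tm.pop a x M)) (subst x N M)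
| passage : a ≠ b → x ∉ fv N →
    Rule (Tm.push N b (Tm.pop a x M)) (Tm.pop a x (Tm.push N b M))
| next : Rule (Tm.seq Tm.skip M) M
| prefixPop : x ∉ fv M → Rule (Tm.seq (Tm.pop a x N) M) (Tm.pop a x (Tm.seq N M))
| prefixPush : Rule (Tm.seq (Tm.push P a N) M) (Tm.push P a (Tm.seq N M))
| assoc : Rule (Tm.seq (Tm.seq P N) M) (Tm.seq P (Tm.seq N M))

/-- The beta rule alone. -/
inductive BetaRule : Tm → Tm → Prop
| beta : BetaRule (Tm.push N a (Tm.pop a x M)) (subst x N M)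

/-- The five non-beta reduction rules. -/
inductive NBRule : Tm → Tm → Prop
| passage : a ≠ b → x ∉ fv N →
    NBRule (Tm.push N b (Tm.pop a x M)) (Tm.pop a x (Tm.push N b M))
| next : NBRule (Tm.seq Tm.skip M) M
| prefixPop : x ∉ fv M → NBRule (Tm.seq (Tm.pop a x N) M) (Tm.pop a x (Tm.seq N M))
| prefixPush : NBRule (Tm.seq (Tm.push P a N) M) (Tm.push P a (Tm.seq N M))
| assoc : NBRule (Tm.seq (Tm.seq P N) M) (Tm.seq P (Tm.seq N M))

/-- Rules flagged by whether they are beta/next (weight-decreasing) steps. -/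
inductive RuleK : Bool → Tm → Tm → Prop
| beta : RuleK true (Tm.push N a (Tm.pop a x M)) (subst x N M)
| next : RuleK true (Tm.seq Tm.skip M) M
| passage : a ≠ b → x ∉ fv N →
    RuleK false (Tm.push N b (Tm.pop a x M)) (Tm.pop a x (Tm.push N b M))
| prefixPop : x ∉ fv M → RuleK false (Tm.seq (Tm.pop a x N) M) (Tm.pop a x (Tm.seq N M))
| prefixPush : RuleK false (Tm.seq (Tm.push P a N) M) (Tm.push P a (Tm.seq N M))
| assoc : RuleK false (Tm.seq (Tm.seq P N) M) (Tm.seq P (Tm.seq N M))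

/-- Closure of a rule relation under all contexts. -/
inductive Clo (r : Tm → Tm → Prop) : Tm → Tm → Prop
| base : r M N → Clo r M N
| pop : Clo r M N → Clo r (Tm.pop a x M) (Tm.pop a x N)
| pushBody : Clo r M N → Clo r (Tm.push P a M) (Tm.push P a N)
| pushArg : Clo r M N → Clo r (Tm.push M a P) (Tm.push N a P)
| seqL : Clo r M N → Clo r (Tm.seq M P) (Tm.seq N P)
| seqR : Clo r M N → Clo r (Tm.seq P M) (Tm.seq P N)

/-- Closure of a rule relation under spine contexts (no argument position). -/
inductive SpineClo (r : Tm → Tm → Prop) : Tm → Tm → Prop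
| base : r M N → SpineClo r M N
| pop : SpineClo r M N → SpineClo r (Tm.pop a x M) (Tm.pop a x N)
| pushBody : SpineClo r M N → SpineClo r (Tm.push P a M) (Tm.push P a N)
| seqL : SpineClo r M N → SpineClo r (Tm.seq M P) (Tm.seq N P)
| seqR : SpineClo r M N → SpineClo r (Tm.seq P M) (Tm.seq P N)

/-- Computation types: implications between memory types; a memory type assigns
to each location a vector (list) of collection types, a collection type being
a finite collection (list, read as multiset) of computation types. -/
inductive Ty : Type
| arr : (ℕ → List (List Ty)) → (ℕ → List (List Ty)) → Ty

abbrev Coll := List Ty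
abbrev MemT := ℕ → List Coll

def emptyMT : MemT := fun _ => []

/-- Prepend collection ι at location a of a memory type. -/
def consAt (a : ℕ) (ι : Coll) (κ : MemT) : MemT :=
  fun b => if b = a then ι :: κ b else κ b

/-- Typing contexts assign collection types to variables. -/
abbrev Ctx := ℕ → Coll

def emptyCtx : Ctx := fun _ => []
def ctxAdd (Γ Δ : Ctx) : Ctx := fun x => Γ x ++ Δ x
def singleCtx (x : ℕ) (ι : Coll) : Ctx := fun y => if y = x then ι else []

mutual
/-- Weak quantitative typing of terms, with weight. -/
inductive WT : Ctx → Tm → Ty → ℕ → Prop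
| var : WT (singleCtx x [t]) (Tm.var x) t 0
| abs : WT Γ M (Ty.arr κ μ) n →
    WT (Function.update Γ x []) (Tm.pop a x M) (Ty.arr (consAt a (Γ x) κ) μ) (n+1)
| app : WTC Γ N ι n → WT Δ M (Ty.arr (consAt a ι κ) μ) m →
    WT (ctxAdd Γ Δ) (Tm.push N a M) (Ty.arr κ μ) (n+m+1)
| unit : WT emptyCtx Tm.skip (Ty.arr ι ι) 1
| seq : WT Γ M (Ty.arr ι κ) n → WT Δ N (Ty.arr κ μ) m →
    WT (ctxAdd Γ Δ) (Tm.seq M N) (Ty.arr ι μ) (n+m+1)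
/-- Weak typing of a term by a collection type (the collection rule). -/
inductive WTC : Ctx → Tm → Coll → ℕ → Prop
| nil : WTC emptyCtx M [] 0
| cons : WT Γ M t n → WTC Δ M ts m → WTC (ctxAdd Γ Δ) M (t :: ts) (n+m)
end

mutual
/-- Strong quantitative typing of terms, with weight. -/
inductive StrT : Ctx → Tm → Ty → ℕ → Prop
| var : StrT (singleCtx x [t]) (Tm.var x) t 0
| abs : StrT Γ M (Ty.arr κ μ) n →
    StrT (Function.update Γ x []) (Tm.pop a x M) (Ty.arr (consAt a (Γ x) κ) μ) (n+1)
| app : StrTC Γ N ι n → StrT Δ M (Ty.arr (consAt a ι κ) μ) m → StrT E N t k →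
    StrT (ctxAdd (ctxAdd Γ Δ) E) (Tm.push N a M) (Ty.arr κ μ) (n+m+k+1)
| unit : StrT emptyCtx Tm.skip (Ty.arr ι ι) 1
| seq : StrT Γ M (Ty.arr ι κ) n → StrT Δ N (Ty.arr κ μ) m →
    StrT (ctxAdd Γ Δ) (Tm.seq M N) (Ty.arr ι μ) (n+m+1)
| weak : StrT Γ M t n → StrT (ctxAdd Γ Δ) M t n
/-- Strong typing of a term by a collection type. -/
inductive StrTC : Ctx → Tm → Coll → ℕ → Prop
| nil : StrTC emptyCtx M [] 0
| cons : StrT Γ M t n → StrTC Δ M ts m → StrTC (ctxAdd Γ Δ) M (t :: ts) (n+m)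
end

/-- Weak typing of a single stack. -/
inductive WStk : List Tm → List Coll → ℕ → Prop
| nil : WStk [] [] 0
| cons : WTC emptyCtx N ν n → WStk S ι m → WStk (N :: S) (ν :: ι) (n+m)

/-- Weak typing of a memory: each stack typed, with finitely-supported weights. -/
def WM (S : Mem) (ι : MemT) (n : ℕ) : Prop :=
  ∃ w : ℕ → ℕ, (∀ a, WStk (S a) (ι a) (w a)) ∧
    ∃ l : Finset ℕ, (∀ a ∉ l, w a = 0) ∧ n = ∑ a ∈ l, w a

/-- Weak typing of a continuation stack. -/
inductive WK : List Tm → Ty → ℕ → Prop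
| nil : WK [] (Ty.arr ι ι) 0
| cons : WT emptyCtx M (Ty.arr ι κ) n → WK K (Ty.arr κ μ) m →
    WK (M :: K) (Ty.arr ι μ) (n+m)

/-- Weak typing of a machine state, with type ε ⇒ μ⃗. -/
inductive WS : MState → MemT → ℕ → Prop
| mk : WM S ι n → WT emptyCtx M (Ty.arr ι κ) m → WK K (Ty.arr κ μ) k →
    WS (S, M, K) μ (n+m+k)

mutual
/-- Spine normal forms W. -/
inductive SpNF : Tm → Prop
| abs : SpNF M → SpNF (Tm.pop a x M)
| ofV : SpNFV M → SpNF M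
/-- Spine normal forms V (those that are not abstractions). -/
inductive SpNFV : Tm → Prop
| push : SpNFV M → SpNFV (Tm.push N a M)
| seq : SpNF M → SpNFV (Tm.seq (Tm.var x) M)
| var : SpNFV (Tm.var x)
| skip : SpNFV Tm.skip
end

mutual
/-- Normal forms of full reduction. -/
inductive NF : Tm → Prop
| abs : NF M → NF (Tm.pop a x M)
| ofV : NFV M → NF M
inductive NFV : Tm → Prop
| push : NF N → NFV M → NFV (Tm.push N a M)
| seq : NF M → NFV (Tm.seq (Tm.var x) M)
| var : NFV (Tm.var x)
| skip : NFV Tm.skip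
end

/-- A weak head context of applications, applied to a term. -/
def apps : List (Tm × ℕ) → Tm → Tm
| [], M => M
| (N, a) :: l, M => Tm.push N a (apps l M)

/-- The memory generated by executing a sequence of pushes. -/
def memOf (l : List (Tm × ℕ)) : Mem :=
  l.foldl (fun S p => pushMem S p.2 p.1) emptyMem

mutual
/-- Perpetual evaluation. -/
inductive Perp : Tm → Tm → Prop
| beta : Perp (apps l (subst x N M)) P → Perp N Q →
    Perp (apps l (Tm.push N a (Tm.pop a x M))) P
| passage : a ≠ b → x ∉ fv N →
    Perp (apps l (Tm.pop a x (Tm.push N b M))) P →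
    Perp (apps l (Tm.push N b (Tm.pop a x M))) P
| next : Perp (apps l M) P → Perp (apps l (Tm.seq Tm.skip M)) P
| prefixPop : x ∉ fv M → Perp (apps l (Tm.pop a x (Tm.seq N M))) P →
    Perp (apps l (Tm.seq (Tm.pop a x N) M)) P
| prefixPush : Perp (apps l (Tm.push Q a (Tm.seq N M))) P →
    Perp (apps l (Tm.seq (Tm.push Q a N) M)) P
| assoc : Perp (apps l (Tm.seq Q (Tm.seq N M))) P →
    Perp (apps l (Tm.seq (Tm.seq Q N) M)) P
| abs : Perp M P → Perp (Tm.pop a x M) (Tm.pop a x P)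
| unit : PerpL l l' → Perp (apps l Tm.skip) (apps l' Tm.skip)
| var : PerpL l l' → Perp (apps l (Tm.var x)) (apps l' (Tm.var x))
| seqvar : PerpL l l' → Perp M P →
    Perp (apps l (Tm.seq (Tm.var x) M)) (apps l' (Tm.seq (Tm.var x) P))
/-- Pointwise perpetual evaluation of weak head contexts. -/
inductive PerpL : List (Tm × ℕ) → List (Tm × ℕ) → Prop
| nil : PerpL [] []
| cons : Perp N P → PerpL l l' → PerpL ((N, a) :: l) ((P, a) :: l')
end

/-- Memories of dimension d (over a finite set of locations A). -/
def MemDim (A : Finset ℕ) : ℕ → Mem → Prop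
| 0 => fun S => ∀ a ∉ A, S a = []
| d+1 => fun S => (∀ a ∉ A, S a = []) ∧
    ∀ a ∈ A, d + 1 ≤ (S a).length ∧
      ∀ N ∈ S a, ∃ l, N = apps l Tm.skip ∧ MemDim A d (memOf l)

/-- Terms of dimension d: a sequence of pushes ending in skip generating a
memory of dimension d. -/
def TmDim (A : Finset ℕ) (d : ℕ) (M : Tm) : Prop :=
  ∃ l, M = apps l Tm.skip ∧ MemDim A d (memOf l)

/-- Simultaneous substitution by a substitution map. -/
def msubst (σ : ℕ → Tm) : Tm → Tm
| Tm.var y => σ y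
| Tm.pop a y M => Tm.pop a y (msubst (Function.update σ y (Tm.var y)) M)
| Tm.push N a M => Tm.push (msubst σ N) a (msubst σ M)
| Tm.skip => Tm.skip
| Tm.seq M N => Tm.seq (msubst σ M) (msubst σ N)
/- ===== auxiliary development ===== -/

section Aux

/-- Number of pops along the spine (ignoring push arguments). -/
def np : Tm → ℕ
| Tm.var _ => 0
| Tm.pop _ _ M => np M + 1
| Tm.push _ _ M => np M
| Tm.skip => 0
| Tm.seq M N => np M + np N

/-- Pop locations along the spine. -/
def Lcs : Tm → Finset ℕ
| Tm.var _ => ∅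
| Tm.pop a _ M => insert a (Lcs M)
| Tm.push _ _ M => Lcs M
| Tm.skip => ∅
| Tm.seq M N => Lcs M ∪ Lcs N

def pushAll (S : Mem) (l : List (Tm × ℕ)) : Mem :=
  l.foldl (fun S p => pushMem S p.2 p.1) S

lemma eval_apps (l : List (Tm × ℕ)) (S : Mem) :
    Eval S (apps l Tm.skip) (l.length + 1) (pushAll S l) := by
  induction l generalizing S with
  | nil => exact Eval.skip
  | cons p l ih =>
    obtain ⟨N, a⟩ := p
    exact Eval.push (ih _)

lemma pushMem_apply (S : Mem) (b : ℕ) (N : Tm) (a : ℕ) :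
    pushMem S b N a = (if a = b then [N] else []) ++ S a := by
  by_cases h : a = b <;> simp [pushMem, Function.update, h]

lemma pushAll_apply (l : List (Tm × ℕ)) (S : Mem) (a : ℕ) :
    pushAll S l a = memOf l a ++ S a := by
  induction l generalizing S with
  | nil => simp [pushAll, memOf, emptyMem]
  | cons p l ih =>
    show pushAll (pushMem S p.2 p.1) l a
        = pushAll (pushMem emptyMem p.2 p.1) l a ++ S a
    rw [ih, ih (pushMem emptyMem p.2 p.1), pushMem_apply, pushMem_apply,
      List.append_assoc]
    simp [emptyMem]

def substL (x : ℕ) (N : Tm) (l : List (Tm × ℕ)) : List (Tm × ℕ) :=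
  l.map (fun p => (subst x N p.1, p.2))

lemma subst_apps (x : ℕ) (N : Tm) (l : List (Tm × ℕ)) :
    subst x N (apps l Tm.skip) = apps (substL x N l) Tm.skip := by
  induction l with
  | nil => rfl
  | cons p l ih => simp [apps, substL, subst, ih]

lemma pushAll_subst (x : ℕ) (N : Tm) :
    ∀ (l : List (Tm × ℕ)) (S S' : Mem),
    (∀ a, S' a = (S a).map (subst x N)) →
    ∀ a, pushAll S' (substL x N l) a = ((pushAll S l) a).map (subst x N) := by
  intro l
  induction l with
  | nil => intro S S' h a; exact h a
  | cons p l ih =>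
    intro S S' h a
    show pushAll (pushMem S' p.2 (subst x N p.1)) (substL x N l) a
        = (pushAll (pushMem S p.2 p.1) l a).map (subst x N)
    apply ih
    intro b
    by_cases hb : b = p.2
    · simp [pushMem, Function.update, hb, h p.2]
    · simp [pushMem, Function.update, hb, h b]

lemma memOf_substL (x : ℕ) (N : Tm) (l : List (Tm × ℕ)) (a : ℕ) :
    memOf (substL x N l) a = (memOf l a).map (subst x N) :=
  pushAll_subst x N l emptyMem emptyMem (by simp [emptyMem]) a

lemma memDim_subst (A : Finset ℕ) (x : ℕ) (N : Tm) :
    ∀ (d : ℕ) (S S' : Mem), (∀ a, S' a = (S a).map (subst x N)) →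
      MemDim A d S → MemDim A d S' := by
  intro d
  induction d with
  | zero =>
    intro S S' h hS a ha
    rw [h a, hS a ha]; rfl
  | succ d ih =>
    intro S S' h hS
    refine ⟨fun a ha => by rw [h a, hS.1 a ha]; rfl, fun a ha => ?_⟩
    obtain ⟨hlen, helt⟩ := hS.2 a ha
    refine ⟨by rw [h a, List.length_map]; exact hlen, fun P' hP' => ?_⟩
    rw [h a] at hP'
    obtain ⟨P, hP, rfl⟩ := List.mem_map.1 hP'
    obtain ⟨l, rfl, hm⟩ := helt P hP
    exact ⟨substL x N l, subst_apps x N l,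
      ih (memOf l) (memOf (substL x N l)) (memOf_substL x N l) hm⟩

lemma tmDim_subst {A : Finset ℕ} {d : ℕ} {M : Tm} (x : ℕ) (N : Tm)
    (h : TmDim A d M) : TmDim A d (subst x N M) := by
  obtain ⟨l, rfl, hm⟩ := h
  exact ⟨substL x N l, subst_apps x N l,
    memDim_subst A x N d (memOf l) _ (memOf_substL x N l) hm⟩

lemma memDim_step (A : Finset ℕ) :
    ∀ (d : ℕ) (S : Mem), MemDim A (d+1) S → MemDim A d S := by
  intro d
  induction d with
  | zero => intro S h; exact h.1
  | succ d ih =>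
    intro S h
    refine ⟨h.1, fun a ha => ?_⟩
    obtain ⟨hlen, helt⟩ := h.2 a ha
    refine ⟨by omega, fun P hP => ?_⟩
    obtain ⟨l, rfl, hm⟩ := helt P hP
    exact ⟨l, rfl, ih _ hm⟩

lemma memDim_mono {A : Finset ℕ} {S : Mem} :
    ∀ {d e : ℕ}, e ≤ d → MemDim A d S → MemDim A e S := by
  intro d
  induction d with
  | zero =>
    intro e he h
    have : e = 0 := by omega
    subst this; exact h
  | succ d ih =>
    intro e he h
    rcases Nat.eq_or_lt_of_le he with rfl | hlt
    · exact h
    · exact ih (by omega) (memDim_step A d S h)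

lemma tmDim_mono {A : Finset ℕ} {M : Tm} {d e : ℕ} (he : e ≤ d)
    (h : TmDim A d M) : TmDim A e M := by
  obtain ⟨l, rfl, hm⟩ := h
  exact ⟨l, rfl, memDim_mono he hm⟩

/-- Top-`e` goodness of a memory. -/
def Good (A : Finset ℕ) (e : ℕ) (S : Mem) : Prop :=
  ∀ a ∈ A, e ≤ (S a).length ∧ ∀ N ∈ (S a).take e, ∀ f, f < e → TmDim A f N

lemma good_of_memDim {A : Finset ℕ} {e : ℕ} {S : Mem}
    (h : MemDim A e S) : Good A e S := by
  cases e with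
  | zero => intro a _; exact ⟨Nat.zero_le _, by simp⟩
  | succ e =>
    intro a ha
    obtain ⟨hlen, helt⟩ := h.2 a ha
    refine ⟨hlen, fun N hN f hf => ?_⟩
    exact tmDim_mono (by omega) (helt N (List.take_subset _ _ hN))

lemma good_pushAll {A : Finset ℕ} {e : ℕ} {l : List (Tm × ℕ)}
    (hm : MemDim A e (memOf l)) (S : Mem) : Good A e (pushAll S l) := by
  cases e with
  | zero => intro a _; exact ⟨Nat.zero_le _, by simp⟩
  | succ e =>
    intro a ha
    obtain ⟨hlen, helt⟩ := hm.2 a ha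
    rw [pushAll_apply]
    constructor
    · rw [List.length_append]; omega
    · rw [List.take_append_of_le_length hlen]
      intro N hN f hf
      exact tmDim_mono (by omega) (helt N (List.take_subset _ _ hN))

lemma good_pop {A : Finset ℕ} {e : ℕ} {S : Mem} {a : ℕ} {N : Tm} {rest : List Tm}
    (hg : Good A (e+1) S) (hSa : S a = N :: rest) :
    Good A e (Function.update S a rest) := by
  intro b hb
  obtain ⟨hlen, helt⟩ := hg b hb
  by_cases hba : b = a
  · subst hba
    rw [hSa] at hlen helt
    simp only [Function.update_self]
    refine ⟨by simpa using hlen, fun P hP f hf => ?_⟩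
    exact helt P (by simp [List.take]; right; exact hP) f (by omega)
  · simp only [Function.update_of_ne hba]
    refine ⟨by omega, fun P hP f hf => ?_⟩
    refine helt P ?_ f (by omega)
    have : (S b).take e = ((S b).take (e+1)).take e := by
      rw [List.take_take]; congr 1; omega
    rw [this] at hP
    exact List.take_subset _ _ hP

/-- Good instantiated spine-normal terms, with environment, budget and size. -/
inductive G (A : Finset ℕ) : Bool → (ℕ → Option ℕ) → ℕ → ℕ → Tm → Prop
| pop {a : ℕ} {Γ : ℕ → Option ℕ} {x e n : ℕ} {M : Tm} :
    a ∈ A → G A true (Function.update Γ x (some e)) e n M →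
    G A true Γ (e+1) (n+1) (Tm.pop a x M)
| ofV {Γ : ℕ → Option ℕ} {e n : ℕ} {M : Tm} :
    G A false Γ 0 n M → G A true Γ e (n+1) M
| push {Γ : ℕ → Option ℕ} {n : ℕ} {N M : Tm} {a : ℕ} :
    G A false Γ 0 n M → G A false Γ 0 (n+1) (Tm.push N a M)
| leafTm {Γ : ℕ → Option ℕ} {l : List (Tm × ℕ)} :
    G A false Γ 0 1 (apps l Tm.skip)
| leafVar {Γ : ℕ → Option ℕ} {x f : ℕ} :
    Γ x = some f → G A false Γ 0 1 (Tm.var x)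
| seqTm {Γ : ℕ → Option ℕ} {e n : ℕ} {l : List (Tm × ℕ)} {M : Tm} :
    MemDim A e (memOf l) → G A true Γ e n M →
    G A false Γ 0 (n+1) (Tm.seq (apps l Tm.skip) M)
| seqVar {Γ : ℕ → Option ℕ} {x f e n : ℕ} {M : Tm} :
    Γ x = some f → e ≤ f → G A true Γ e n M →
    G A false Γ 0 (n+1) (Tm.seq (Tm.var x) M)

end Aux

section Aux2

lemma G_subst {A : Finset ℕ} {b : Bool} {Γ : ℕ → Option ℕ} {e n : ℕ} {M : Tm}
    (h : G A b Γ e n M) :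
    ∀ (z : ℕ) (N : Tm) (f : ℕ), Γ z = some f → TmDim A f N →
      G A b (Function.update Γ z none) e n (subst z N M) := by
  induction h with
  | @pop a Γ x e n M ha hM ih =>
    intro z N f hΓ hN
    by_cases hxz : x = z
    · subst hxz
      show G A true (Function.update Γ x none) (e+1) (n+1) (subst x N (Tm.pop a x M))
      rw [subst, if_pos rfl]
      refine G.pop ha ?_
      rw [Function.update_idem]
      exact hM
    · show G A true (Function.update Γ z none) (e+1) (n+1) (subst z N (Tm.pop a x M))
      rw [subst, if_neg hxz]
      refine G.pop ha ?_
      have h1 := ih z N f (by rw [Function.update_of_ne (Ne.symm hxz)]; exact hΓ) hN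
      rwa [Function.update_comm hxz] at h1
  | ofV hM ih =>
    intro z N f hΓ hN
    exact G.ofV (ih z N f hΓ hN)
  | push hM ih =>
    intro z N f hΓ hN
    exact G.push (ih z N f hΓ hN)
  | @leafTm Γ l =>
    intro z N f hΓ hN
    rw [subst_apps]
    exact G.leafTm
  | @leafVar Γ x f0 hx =>
    intro z N f hΓ hN
    by_cases hxz : x = z
    · subst hxz
      rw [hx] at hΓ
      have hff : f0 = f := Option.some.inj hΓ
      obtain ⟨l, hl, hm⟩ := hN
      show G A false (Function.update Γ x none) 0 1 (subst x N (Tm.var x))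
      rw [subst, if_pos rfl, hl]
      exact G.leafTm
    · show G A false (Function.update Γ z none) 0 1 (subst z N (Tm.var x))
      rw [subst, if_neg hxz]
      exact G.leafVar (by rw [Function.update_of_ne hxz]; exact hx)
  | @seqTm Γ e n l M hm hM ih =>
    intro z N f hΓ hN
    show G A false _ 0 (n+1) (Tm.seq (subst z N (apps l Tm.skip)) (subst z N M))
    rw [subst_apps]
    exact G.seqTm (memDim_subst A z N e (memOf l) _ (memOf_substL z N l) hm)
      (ih z N f hΓ hN)
  | @seqVar Γ x f0 e n M hx hef hM ih =>
    intro z N f hΓ hN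
    show G A false _ 0 (n+1) (Tm.seq (subst z N (Tm.var x)) (subst z N M))
    by_cases hxz : x = z
    · subst hxz
      rw [hx] at hΓ
      have hff : f0 = f := Option.some.inj hΓ
      obtain ⟨l, hl, hm⟩ := tmDim_mono (hff ▸ hef) hN
      rw [subst, if_pos rfl, hl]
      have := ih x N f (hff ▸ hx) hN
      rw [hl] at this
      exact G.seqTm hm this
    · rw [subst, if_neg hxz]
      exact G.seqVar (by rw [Function.update_of_ne hxz]; exact hx) hef
        (ih z N f hΓ hN)

lemma G_eval {A : Finset ℕ} :
    ∀ (n : ℕ) {b : Bool} {Γ : ℕ → Option ℕ} {e : ℕ} {M : Tm} {S : Mem},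
      G A b Γ e n M → (∀ z, Γ z = none) → (b = true → Good A e S) →
      ∃ T m, Eval S M m T := by
  intro n
  induction n using Nat.strong_induction_on with
  | _ n ih =>
  intro b Γ e M S hG hΓ hGood
  cases hG with
  | @pop a _ x e n' M ha hM =>
    have hg := hGood rfl
    obtain ⟨hlen, helt⟩ := hg a ha
    obtain ⟨N, rest, hSa⟩ : ∃ N rest, S a = N :: rest := by
      cases h : S a with
      | nil => rw [h] at hlen; simp at hlen
      | cons N rest => exact ⟨N, rest, rfl⟩
    have hN : TmDim A e N := by
      refine helt N ?_ e (Nat.lt_succ_self e)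
      rw [hSa]; simp
    have h4 := G_subst hM x N e (Function.update_self x (some e) Γ) hN
    have hΓ' : ∀ z, Function.update (Function.update Γ x (some e)) x none z = none := by
      intro z
      by_cases hz : z = x <;> simp [Function.update, hz, hΓ z]
    obtain ⟨T, m, hEv⟩ := ih n' (by omega) h4 hΓ'
      (fun _ => good_pop (hGood rfl) hSa)
    refine ⟨T, m+1, ?_⟩
    have hS : S = pushMem (Function.update S a rest) a N := by
      funext c
      by_cases hc : c = a <;> simp [pushMem, Function.update, hc, hSa]
    rw [hS]
    exact Eval.pop hEv
  | @ofV _ _ n' M hM =>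
    exact ih n' (by omega) hM hΓ (fun h => by simp at h)
  | @push _ n' N M a hM =>
    obtain ⟨T, m, hE⟩ := ih n' (by omega) hM hΓ (fun h => by simp at h)
    exact ⟨T, m+1, Eval.push hE⟩
  | @leafTm _ l =>
    exact ⟨pushAll S l, l.length + 1, eval_apps l S⟩
  | leafVar hx =>
    rw [hΓ _] at hx; exact absurd hx (by simp)
  | @seqTm _ e' n' l M hm hM =>
    obtain ⟨T, m, hE2⟩ := ih n' (by omega) hM hΓ (fun _ => good_pushAll hm S)
    exact ⟨T, (l.length + 1) + m + 1, Eval.seq (eval_apps l S) hE2⟩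
  | seqVar hx _ _ =>
    rw [hΓ _] at hx; exact absurd hx (by simp)

end Aux2

section Aux3

/-- Condition on a substitution map and environment at level `m`. -/
def Cc (A : Finset ℕ) (σ : ℕ → Tm) (Γ : ℕ → Option ℕ) (m : ℕ) : Prop :=
  ∀ y, (σ y = Tm.var y ∧ ∃ f, Γ y = some f ∧ m ≤ f) ∨
       (∃ l, σ y = apps l Tm.skip ∧ MemDim A m (memOf l))

lemma Cc_mono {A : Finset ℕ} {σ : ℕ → Tm} {Γ : ℕ → Option ℕ} {m m' : ℕ}
    (h : m' ≤ m) (hc : Cc A σ Γ m) : Cc A σ Γ m' := by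
  intro y
  rcases hc y with ⟨h1, f, h2, h3⟩ | ⟨l, h1, h2⟩
  · exact Or.inl ⟨h1, f, h2, le_trans h h3⟩
  · exact Or.inr ⟨l, h1, memDim_mono h h2⟩

lemma L0 (A : Finset ℕ) : ∀ M : Tm,
    (SpNF M → ∀ Γ σ, Cc A σ Γ (np M) → Lcs M ⊆ A →
      ∃ n, G A true Γ (np M) n (msubst σ M)) ∧
    (SpNFV M → ∀ Γ σ, Cc A σ Γ (np M) → Lcs M ⊆ A →
      ∃ n, G A false Γ 0 n (msubst σ M)) := by
  intro M
  induction M with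
  | var x =>
    have hv : ∀ Γ σ, Cc A σ Γ (np (Tm.var x)) → Lcs (Tm.var x) ⊆ A →
        ∃ n, G A false Γ 0 n (msubst σ (Tm.var x)) := by
      intro Γ σ hC _
      show ∃ n, G A false Γ 0 n (σ x)
      rcases hC x with ⟨hσ, f, hf, -⟩ | ⟨l, hσ, -⟩
      · rw [hσ]; exact ⟨1, G.leafVar hf⟩
      · rw [hσ]; exact ⟨1, G.leafTm⟩
    refine ⟨fun _ Γ σ hC hL => ?_, fun _ => hv⟩
    obtain ⟨n, hg⟩ := hv Γ σ hC hL
    exact ⟨n+1, G.ofV hg⟩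
  | skip =>
    have hv : ∀ Γ σ, ∃ n, G A false Γ 0 n (msubst σ Tm.skip) := by
      intro Γ σ
      show ∃ n, G A false Γ 0 n Tm.skip
      exact ⟨1, G.leafTm (l := [])⟩
    refine ⟨fun _ Γ σ _ _ => ?_, fun _ Γ σ _ _ => hv Γ σ⟩
    obtain ⟨n, hg⟩ := hv Γ σ
    exact ⟨n+1, G.ofV hg⟩
  | pop a x M ihM =>
    constructor
    · intro h Γ σ hC hL
      have hM : SpNF M := by
        cases h with
        | abs h => exact h
        | ofV h => cases h
      have ha : a ∈ A := hL (Finset.mem_insert_self a _)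
      have hL' : Lcs M ⊆ A := fun b hb => hL (Finset.mem_insert_of_mem hb)
      have hC' : Cc A (Function.update σ x (Tm.var x))
          (Function.update Γ x (some (np M))) (np M) := by
        intro y
        by_cases hyx : y = x
        · subst hyx
          exact Or.inl ⟨Function.update_self _ _ _,
            np M, Function.update_self _ _ _, le_refl _⟩
        · have := Cc_mono (m := np (Tm.pop a x M)) (m' := np M)
            (by simp only [np]; omega) hC y
          rcases this with ⟨h1, f, h2, h3⟩ | ⟨l, h1, h2⟩
          · exact Or.inl ⟨by rw [Function.update_of_ne hyx]; exact h1,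
              f, by rw [Function.update_of_ne hyx]; exact h2, h3⟩
          · exact Or.inr ⟨l, by rw [Function.update_of_ne hyx]; exact h1, h2⟩
      obtain ⟨n, hg⟩ := ihM.1 hM _ _ hC' hL'
      exact ⟨n+1, G.pop ha hg⟩
    · intro h; cases h
  | push N a M ihN ihM =>
    have hv : SpNFV (Tm.push N a M) → ∀ Γ σ, Cc A σ Γ (np (Tm.push N a M)) →
        Lcs (Tm.push N a M) ⊆ A →
        ∃ n, G A false Γ 0 n (msubst σ (Tm.push N a M)) := by
      intro h Γ σ hC hL
      have hM : SpNFV M := by cases h with | push h => exact h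
      obtain ⟨n, hg⟩ := ihM.2 hM Γ σ hC hL
      exact ⟨n+1, G.push hg⟩
    refine ⟨fun h Γ σ hC hL => ?_, hv⟩
    have hM : SpNFV (Tm.push N a M) := by cases h with | ofV h => exact h
    obtain ⟨n, hg⟩ := hv hM Γ σ hC hL
    exact ⟨n+1, G.ofV hg⟩
  | seq M N ihM ihN =>
    have hv : SpNFV (Tm.seq M N) → ∀ Γ σ, Cc A σ Γ (np (Tm.seq M N)) →
        Lcs (Tm.seq M N) ⊆ A →
        ∃ n, G A false Γ 0 n (msubst σ (Tm.seq M N)) := by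
      intro h Γ σ hC hL
      cases h with
      | @seq N' x hN' =>
        have hle : np N ≤ np (Tm.seq (Tm.var x) N) := by simp [np]
        have hC' := Cc_mono hle hC
        have hLN : Lcs N ⊆ A := fun b hb => hL (by simp [Lcs]; exact hb)
        obtain ⟨n, hg⟩ := ihN.1 hN' Γ σ hC' hLN
        show ∃ n, G A false Γ 0 n (Tm.seq (msubst σ (Tm.var x)) (msubst σ N))
        rcases hC x with ⟨hσ, f, hf, hfle⟩ | ⟨l, hσ, hm⟩
        · refine ⟨n+1, ?_⟩
          show G A false Γ 0 (n+1) (Tm.seq (σ x) (msubst σ N))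
          rw [hσ]
          exact G.seqVar hf (le_trans hle hfle) hg
        · refine ⟨n+1, ?_⟩
          show G A false Γ 0 (n+1) (Tm.seq (σ x) (msubst σ N))
          rw [hσ]
          exact G.seqTm (memDim_mono hle hm) hg
    refine ⟨fun h Γ σ hC hL => ?_, hv⟩
    have hM : SpNFV (Tm.seq M N) := by
      cases h with
      | ofV h => exact h
    obtain ⟨n, hg⟩ := hv hM Γ σ hC hL
    exact ⟨n+1, G.ofV hg⟩

end Aux3


/-- Spine normal forms terminate on the machine: for a spine-normal term W
there are a finite set of locations A and a dimension d such that for any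
memory S and substitution map σ of dimension d, evaluation succeeds. -/
theorem spine_NF_terminates (W : Tm) (h : SpNF W) :
    ∃ (A : Finset ℕ) (d : ℕ), ∀ (S : Mem) (σ : ℕ → Tm),
      MemDim A d S → (∀ x, TmDim A d (σ x)) →
      ∃ (T : Mem) (n : ℕ), Eval S (msubst σ W) n T := by
  refine ⟨Lcs W, np W, ?_⟩
  intro S σ hS hσ
  have hC : Cc (Lcs W) σ (fun _ => none) (np W) := fun y => Or.inr (hσ y)
  obtain ⟨n, hg⟩ := (L0 (Lcs W) W).1 h (fun _ => none) σ hC (Finset.Subset.refl _)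
  exact G_eval n hg (fun _ => rfl) (fun _ => good_of_memDim hS)
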